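/- arXiv:2306.03296 — 3 statements merged into one kernel-verified Lean document; each statement's English description precedes it below -/
import Mathlib

section
/- Let k be a field and α1: A1 → B, α2: A2 → B morphisms of commutative Hopf algebras over k. Let P_H be a pullback of (α1, α2) and let P be a pullback of the counits (ε1: A1 → k, ε2: A2 → k) in the category of commutative Hopf algebras over k. Then the canonical morphism P_H → P (induced by the universal property of P, using that the composites P_H → A_i → k both equal the counit of P_H) is injective on underlying sets. Equivalently, the canonical morphism of affine group schemes G1 * G2 → G1 *_H G2 from the free product to the amalgamated free product is a quotient map (faithfully flat). -/
open CategoryTheory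

set_option maxHeartbeats 1000000
set_option synthInstance.maxHeartbeats 400000

universe u

variable (k : Type u) [CommRing k]

/-- The category of commutative Hopf algebras over `k`. -/
structure CommHopfAlgCat' where
  /-- the underlying type -/
  carrier : Type u
  [isCommRing : CommRing carrier]
  [isHopfAlgebra : HopfAlgebra k carrier]

attribute [instance] CommHopfAlgCat'.isCommRing CommHopfAlgCat'.isHopfAlgebra

namespace CommHopfAlgCat'

instance : CoeSort (CommHopfAlgCat' k) (Type u) := ⟨carrier⟩

variable {k}

instance : Category (CommHopfAlgCat' k) where
  Hom A B := A →ₐc[k] B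
  id A := BialgHom.id k A
  comp f g := g.comp f
  id_comp _ := BialgHom.ext fun _ => rfl
  comp_id _ := BialgHom.ext fun _ => rfl
  assoc _ _ _ := BialgHom.ext fun _ => rfl

instance {A B : CommHopfAlgCat' k} : FunLike (A ⟶ B) A B :=
  inferInstanceAs (FunLike (A →ₐc[k] B) A B)

variable (k)

/-- `k` itself as a commutative Hopf algebra over `k`. -/
noncomputable def unitObj : CommHopfAlgCat' k := { carrier := k }

variable {k}

/-- The counit of a commutative Hopf algebra, as a morphism to `k`;
this is the Hopf algebra morphism dual to the unit of the corresponding affine group scheme. -/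
noncomputable def counitHom (A : CommHopfAlgCat' k) : A ⟶ unitObj k :=
  Bialgebra.counitBialgHom k A

end CommHopfAlgCat'

section HopfQuotient

open Coalgebra HopfAlgebra TensorProduct

namespace HopfQuot

variable {k : Type u} [Field k] {A B : Type u}
  [CommRing A] [CommRing B] [HopfAlgebra k A] [HopfAlgebra k B]

/-- Push forward a `Coalgebra.Repr` along a bialgebra homomorphism. -/
noncomputable def mapRepr (f : A →ₐc[k] B) {a : A} {ι : Type*} (r : Coalgebra.Repr k a ι) :
    Coalgebra.Repr k (f a) ι where
  index := r.index
  left := fun i => f (r.left i)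
  right := fun i => f (r.right i)
  eq := by
    rw [← CoalgHomClass.map_comp_comul_apply f a, ← r.eq, map_sum]
    simp

lemma sum_counit_smul_right {a : A} {ι : Type*} (r : Coalgebra.Repr k a ι) :
    ∑ i ∈ r.index, counit (R := k) (r.left i) • r.right i = a := by
  have h := congrArg (TensorProduct.lid k A) (Coalgebra.sum_counit_tmul_eq r)
  simp only [map_sum, TensorProduct.lid_tmul, one_smul] at h
  exact h

lemma sum_counit_smul_left {a : A} {ι : Type*} (r : Coalgebra.Repr k a ι) :
    ∑ i ∈ r.index, counit (R := k) (r.right i) • r.left i = a := by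
  have h := congrArg (TensorProduct.rid k A) (Coalgebra.sum_tmul_counit_eq r)
  simp only [map_sum, TensorProduct.rid_tmul, one_smul] at h
  exact h

/-- A bialgebra homomorphism, viewed as a plain linear map. -/
noncomputable def bhl (f : A →ₐc[k] B) : A →ₗ[k] B := f.toCoalgHom.toLinearMap

@[simp] lemma bhl_apply (f : A →ₐc[k] B) (x : A) : bhl f x = f x := rfl

/-- A bialgebra homomorphism between commutative Hopf algebras commutes with the antipode. -/
theorem map_antipode (f : A →ₐc[k] B) (a : A) :
    f (antipode (R := k) a) = antipode (R := k) (f a) := by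
  classical
  set r := ℛ k a with hrdef
  have key := Coalgebra.sum_map_tmul_tmul_eq
    (bhl f ∘ₗ antipode (R := k)) (bhl f) (antipode (R := k) ∘ₗ bhl f) a
    (repr := r) (a₁ := fun i => ℛ k (r.left i)) (a₂ := fun i => ℛ k (r.right i))
  have key2 := congrArg (LinearMap.mul' k B ∘ₗ LinearMap.lTensor B (LinearMap.mul' k B)) key
  simp only [map_sum, LinearMap.comp_apply, LinearMap.lTensor_tmul, LinearMap.mul'_apply,
    bhl_apply] at key2
  have hL : ∀ i ∈ r.index,
      ∑ j ∈ (ℛ k (r.right i)).index,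
        f (antipode (R := k) (r.left i)) *
          (f ((ℛ k (r.right i)).left j) * antipode (R := k) (f ((ℛ k (r.right i)).right j)))
      = counit (R := k) (r.right i) • f (antipode (R := k) (r.left i)) := by
    intro i _
    rw [← Finset.mul_sum]
    rw [show (∑ j ∈ (ℛ k (r.right i)).index,
        f ((ℛ k (r.right i)).left j) * antipode (R := k) (f ((ℛ k (r.right i)).right j)))
        = algebraMap k B (counit (R := k) (f (r.right i))) from
      HopfAlgebra.sum_mul_antipode_eq_algebraMap_counit (R := k) (mapRepr f (ℛ k (r.right i)))]
    rw [CoalgHomClass.counit_comp_apply (R := k) f (r.right i), mul_comm, ← Algebra.smul_def]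
  have hR : ∀ i ∈ r.index,
      ∑ j ∈ (ℛ k (r.left i)).index,
        f (antipode (R := k) ((ℛ k (r.left i)).left j)) *
          (f ((ℛ k (r.left i)).right j) * antipode (R := k) (f (r.right i)))
      = counit (R := k) (r.left i) • antipode (R := k) (f (r.right i)) := by
    intro i _
    rw [Finset.sum_congr rfl (fun j _ => (mul_assoc
        (f (antipode (R := k) ((ℛ k (r.left i)).left j)))
        (f ((ℛ k (r.left i)).right j))
        (antipode (R := k) (f (r.right i)))).symm),
      ← Finset.sum_mul]
    rw [show (∑ j ∈ (ℛ k (r.left i)).index,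
        f (antipode (R := k) ((ℛ k (r.left i)).left j)) * f ((ℛ k (r.left i)).right j))
        = algebraMap k B (counit (R := k) (r.left i)) from by
      rw [Finset.sum_congr rfl (fun j _ => (map_mul f _ _).symm), ← map_sum,
        HopfAlgebra.sum_antipode_mul_eq_algebraMap_counit (R := k) (ℛ k (r.left i))]
      exact AlgHomClass.commutes f _]
    rw [← Algebra.smul_def]
  rw [Finset.sum_congr rfl hL, Finset.sum_congr rfl hR] at key2
  have eL : ∑ i ∈ r.index, counit (R := k) (r.right i) • f (antipode (R := k) (r.left i))
      = f (antipode (R := k) a) := by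
    rw [Finset.sum_congr rfl (fun i _ => by
      rw [← map_smul f, ← map_smul (antipode (R := k) (A := A))] :
        ∀ i ∈ r.index, counit (R := k) (r.right i) • f (antipode (R := k) (r.left i))
          = f (antipode (R := k) (counit (R := k) (r.right i) • r.left i)))]
    rw [← map_sum, ← map_sum, sum_counit_smul_left r]
  have eR : ∑ i ∈ r.index, counit (R := k) (r.left i) • antipode (R := k) (f (r.right i))
      = antipode (R := k) (f a) := by
    rw [Finset.sum_congr rfl (fun i _ => by
      rw [← map_smul (antipode (R := k) (A := B)), ← map_smul f] :
        ∀ i ∈ r.index, counit (R := k) (r.left i) • antipode (R := k) (f (r.right i))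
          = antipode (R := k) (f (counit (R := k) (r.left i) • r.right i)))]
    rw [← map_sum, ← map_sum, sum_counit_smul_right r]
  rw [eL, eR] at key2
  exact key2

/-- The kernel of a bialgebra homomorphism, as an ideal. -/
def hker (f : A →ₐc[k] B) : Ideal A := RingHom.ker f

lemma mem_hker {f : A →ₐc[k] B} {x : A} : x ∈ hker f ↔ f x = 0 := RingHom.mem_ker

lemma counit_of_mem_hker {f : A →ₐc[k] B} {x : A} (hx : x ∈ hker f) :
    counit (R := k) x = 0 := by
  rw [← CoalgHomClass.counit_comp_apply (R := k) f x, mem_hker.mp hx, map_zero]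

lemma antipode_mem_hker {f : A →ₐc[k] B} {x : A} (hx : x ∈ hker f) :
    antipode (R := k) x ∈ hker f := by
  rw [mem_hker, map_antipode, mem_hker.mp hx, map_zero]

variable (f : A →ₐc[k] B)

/-- The canonical algebra map to the quotient. -/
noncomputable def mkA : A →ₐ[k] (A ⧸ hker f) := Ideal.Quotient.mkₐ k (hker f)

lemma mkA_surjective : Function.Surjective (mkA f) :=
  Ideal.Quotient.mk_surjective

/-- Lift a `k`-linear map vanishing on the kernel to the quotient. -/
noncomputable def qliftₗ {M : Type u} [AddCommGroup M] [Module k M] (g : A →ₗ[k] M)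
    (h : ∀ x ∈ hker f, g x = 0) : (A ⧸ hker f) →ₗ[k] M :=
  (Submodule.liftQ ((hker f).restrictScalars k) g fun x hx => h x hx) ∘ₗ
    (Submodule.Quotient.restrictScalarsEquiv k (hker f)).symm.toLinearMap

lemma qliftₗ_mk {M : Type u} [AddCommGroup M] [Module k M] (g : A →ₗ[k] M)
    (h : ∀ x ∈ hker f, g x = 0) (x : A) :
    qliftₗ f g h (mkA f x) = g x := by
  simp [qliftₗ, mkA, ← Ideal.Quotient.mk_eq_mk]; rfl

lemma comul_map_mk_eq_zero {x : A} (hx : x ∈ hker f) :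
    TensorProduct.map (mkA f).toLinearMap (mkA f).toLinearMap (comul (R := k) x) = 0 := by
  set π := (mkA f).toLinearMap with hπ
  set j := (Ideal.Quotient.liftₐ (hker f) (f : A →ₐ[k] B)
    (fun a ha => mem_hker.mp ha)).toLinearMap with hj
  have hjmk : ∀ a : A, j (mkA f a) = f a := fun a => by
    simp [hj, mkA, Ideal.Quotient.liftₐ_apply, Ideal.Quotient.mkₐ_eq_mk]; rfl
  have hinj : Function.Injective j := by
    intro u v huv
    obtain ⟨u, rfl⟩ := mkA_surjective f u
    obtain ⟨v, rfl⟩ := mkA_surjective f v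
    rw [hjmk, hjmk] at huv
    have : u - v ∈ hker f := mem_hker.mpr (by rw [map_sub, huv, sub_self])
    simpa [mkA, Ideal.Quotient.mkₐ_eq_mk] using Ideal.Quotient.eq.mpr this
  have hjπ : j ∘ₗ π = f.toCoalgHom.toLinearMap := by
    ext a; exact hjmk a
  have h2 : TensorProduct.map j j (TensorProduct.map π π (comul (R := k) x)) = 0 := by
    rw [← LinearMap.comp_apply, ← TensorProduct.map_comp, hjπ]
    have := CoalgHomClass.map_comp_comul_apply f x
    have hco : TensorProduct.map f.toCoalgHom.toLinearMap f.toCoalgHom.toLinearMap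
        (comul (R := k) x) = comul (R := k) (f x) := this
    rw [hco, mem_hker.mp hx, map_zero]
  have hinj2 : Function.Injective (TensorProduct.map j j) := by
    have hmap : TensorProduct.map j j =
        (LinearMap.rTensor B j) ∘ₗ (LinearMap.lTensor (A ⧸ hker f) j) := by
      rw [LinearMap.rTensor, LinearMap.lTensor, ← TensorProduct.map_comp]
      simp
    rw [hmap, LinearMap.coe_comp]
    exact (Module.Flat.rTensor_preserves_injective_linearMap j hinj).comp
      (Module.Flat.lTensor_preserves_injective_linearMap j hinj)
  exact hinj2 (by rw [h2, map_zero])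

/-- The comultiplication on the quotient. -/
noncomputable def qComul : (A ⧸ hker f) →ₗ[k] ((A ⧸ hker f) ⊗[k] (A ⧸ hker f)) :=
  qliftₗ f (TensorProduct.map (mkA f).toLinearMap (mkA f).toLinearMap ∘ₗ comul)
    (fun x hx => by
      simpa only [LinearMap.comp_apply] using comul_map_mk_eq_zero f hx)

/-- The counit on the quotient. -/
noncomputable def qCounit : (A ⧸ hker f) →ₗ[k] k :=
  qliftₗ f (Coalgebra.counit (R := k))
    (fun x hx => counit_of_mem_hker hx)

/-- The antipode on the quotient. -/
noncomputable def qAntipode : (A ⧸ hker f) →ₗ[k] (A ⧸ hker f) :=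
  qliftₗ f ((mkA f).toLinearMap ∘ₗ antipode (R := k))
    (fun x hx => by
      simp only [LinearMap.comp_apply, AlgHom.toLinearMap_apply, mkA,
        Ideal.Quotient.mkₐ_eq_mk]
      exact Ideal.Quotient.eq_zero_iff_mem.mpr (antipode_mem_hker hx))

lemma qComul_mk (x : A) :
    qComul f (mkA f x) =
      TensorProduct.map (mkA f).toLinearMap (mkA f).toLinearMap (comul (R := k) x) :=
  qliftₗ_mk f _ _ x

lemma qComul_mk_repr {x : A} {ι : Type*} (r : Coalgebra.Repr k x ι) :
    qComul f (mkA f x) = ∑ i ∈ r.index, mkA f (r.left i) ⊗ₜ[k] mkA f (r.right i) := by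
  rw [qComul_mk, ← r.eq, map_sum]
  simp

lemma qCounit_mk (x : A) : qCounit f (mkA f x) = counit (R := k) x :=
  qliftₗ_mk f _ _ x

lemma qAntipode_mk (x : A) : qAntipode f (mkA f x) = mkA f (antipode (R := k) x) :=
  qliftₗ_mk f _ _ x

noncomputable instance quotCoalgebra : Coalgebra k (A ⧸ hker f) where
  comul := qComul f
  counit := qCounit f
  coassoc := by
    apply LinearMap.ext
    intro q
    obtain ⟨a, rfl⟩ := mkA_surjective f q
    classical
    set r := ℛ k a with hrdef
    simp only [LinearMap.comp_apply, LinearEquiv.coe_coe]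
    rw [qComul_mk_repr f r, map_sum, map_sum, map_sum]
    simp only [LinearMap.rTensor_tmul, LinearMap.lTensor_tmul]
    have lhs : ∀ i ∈ r.index,
        (TensorProduct.assoc k (A ⧸ hker f) (A ⧸ hker f) (A ⧸ hker f))
          (qComul f (mkA f (r.left i)) ⊗ₜ[k] mkA f (r.right i)) =
        ∑ j ∈ (ℛ k (r.left i)).index,
          mkA f ((ℛ k (r.left i)).left j) ⊗ₜ[k]
            (mkA f ((ℛ k (r.left i)).right j) ⊗ₜ[k] mkA f (r.right i)) := by
      intro i _
      rw [qComul_mk_repr f (ℛ k (r.left i)), TensorProduct.sum_tmul, map_sum]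
      simp only [TensorProduct.assoc_tmul]
    have rhs : ∀ i ∈ r.index,
        (mkA f (r.left i) ⊗ₜ[k] qComul f (mkA f (r.right i))) =
        ∑ j ∈ (ℛ k (r.right i)).index,
          mkA f (r.left i) ⊗ₜ[k]
            (mkA f ((ℛ k (r.right i)).left j) ⊗ₜ[k] mkA f ((ℛ k (r.right i)).right j)) := by
      intro i _
      rw [qComul_mk_repr f (ℛ k (r.right i)), TensorProduct.tmul_sum]
    rw [Finset.sum_congr rfl lhs, Finset.sum_congr rfl rhs]
    exact (Coalgebra.sum_map_tmul_tmul_eq (mkA f) (mkA f) (mkA f) a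
      (repr := r) (a₁ := fun i => ℛ k (r.left i)) (a₂ := fun i => ℛ k (r.right i))).symm
  rTensor_counit_comp_comul := by
    apply LinearMap.ext
    intro q
    obtain ⟨a, rfl⟩ := mkA_surjective f q
    classical
    set r := ℛ k a with hrdef
    simp only [LinearMap.comp_apply]
    rw [qComul_mk_repr f r, map_sum]
    simp only [LinearMap.rTensor_tmul]
    rw [Finset.sum_congr rfl (fun i _ => by rw [qCounit_mk])]
    exact Coalgebra.sum_counit_tmul_map_eq (mkA f) a (repr := r)
  lTensor_counit_comp_comul := by
    apply LinearMap.ext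
    intro q
    obtain ⟨a, rfl⟩ := mkA_surjective f q
    classical
    set r := ℛ k a with hrdef
    simp only [LinearMap.comp_apply]
    rw [qComul_mk_repr f r, map_sum]
    simp only [LinearMap.lTensor_tmul]
    rw [Finset.sum_congr rfl (fun i _ => by rw [qCounit_mk])]
    exact Coalgebra.sum_map_tmul_counit_eq (mkA f) a (repr := r)

lemma algTensorMap_toLinearMap :
    (Algebra.TensorProduct.map (mkA f) (mkA f)).toLinearMap =
      TensorProduct.map (mkA f).toLinearMap (mkA f).toLinearMap := by
  apply TensorProduct.ext'
  intro a b
  simp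

noncomputable instance quotBialgebra : Bialgebra k (A ⧸ hker f) := by
  refine Bialgebra.mk' k (A ⧸ hker f) ?_ (fun {a b} => ?_) ?_ (fun {a b} => ?_)
  · have : (1 : A ⧸ hker f) = mkA f 1 := (map_one (mkA f)).symm
    rw [this]
    show qCounit f (mkA f 1) = 1
    rw [qCounit_mk]
    exact Bialgebra.counit_one
  · obtain ⟨x, rfl⟩ := mkA_surjective f a
    obtain ⟨y, rfl⟩ := mkA_surjective f b
    show qCounit f (mkA f x * mkA f y) = qCounit f (mkA f x) * qCounit f (mkA f y)
    rw [← map_mul, qCounit_mk, qCounit_mk, qCounit_mk]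
    exact Bialgebra.counit_mul x y
  · have : (1 : A ⧸ hker f) = mkA f 1 := (map_one (mkA f)).symm
    rw [this]
    show qComul f (mkA f 1) = 1
    rw [qComul_mk, Bialgebra.comul_one, ← algTensorMap_toLinearMap]
    simp only [AlgHom.toLinearMap_apply, map_one]
  · obtain ⟨x, rfl⟩ := mkA_surjective f a
    obtain ⟨y, rfl⟩ := mkA_surjective f b
    show qComul f (mkA f x * mkA f y) =
      qComul f (mkA f x) * qComul f (mkA f y)
    rw [← map_mul, qComul_mk, qComul_mk, qComul_mk, Bialgebra.comul_mul,
      ← algTensorMap_toLinearMap]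
    simp only [AlgHom.toLinearMap_apply, map_mul]

noncomputable instance quotHopfAlgebra : HopfAlgebra k (A ⧸ hker f) where
  antipode := qAntipode f
  mul_antipode_rTensor_comul := by
    apply LinearMap.ext
    intro q
    obtain ⟨a, rfl⟩ := mkA_surjective f q
    classical
    set r := ℛ k a with hrdef
    simp only [LinearMap.comp_apply]
    show LinearMap.mul' k _ ((qAntipode f).rTensor _ (qComul f (mkA f a))) = _
    rw [qComul_mk_repr f r, map_sum, map_sum]
    simp only [LinearMap.rTensor_tmul, LinearMap.mul'_apply]
    rw [Finset.sum_congr rfl (fun i _ => by rw [qAntipode_mk, ← map_mul]), ← map_sum,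
      HopfAlgebra.sum_antipode_mul_eq_algebraMap_counit r]
    show mkA f (algebraMap k A (counit (R := k) a)) = algebraMap k _ (qCounit f (mkA f a))
    rw [qCounit_mk, AlgHom.commutes]
  mul_antipode_lTensor_comul := by
    apply LinearMap.ext
    intro q
    obtain ⟨a, rfl⟩ := mkA_surjective f q
    classical
    set r := ℛ k a with hrdef
    simp only [LinearMap.comp_apply]
    show LinearMap.mul' k _ ((qAntipode f).lTensor _ (qComul f (mkA f a))) = _
    rw [qComul_mk_repr f r, map_sum, map_sum]
    simp only [LinearMap.lTensor_tmul, LinearMap.mul'_apply]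
    rw [Finset.sum_congr rfl (fun i _ => by rw [qAntipode_mk, ← map_mul]), ← map_sum,
      HopfAlgebra.sum_mul_antipode_eq_algebraMap_counit r]
    show mkA f (algebraMap k A (counit (R := k) a)) = algebraMap k _ (qCounit f (mkA f a))
    rw [qCounit_mk, AlgHom.commutes]

/-- The quotient map as a bialgebra homomorphism. -/
noncomputable def quotMk : A →ₐc[k] (A ⧸ hker f) :=
  { toLinearMap := (mkA f).toLinearMap
    counit_comp := by
      apply LinearMap.ext
      intro a
      show qCounit f (mkA f a) = counit (R := k) a
      exact qCounit_mk f a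
    map_comp_comul := by
      apply LinearMap.ext
      intro a
      show TensorProduct.map (mkA f).toLinearMap (mkA f).toLinearMap (comul a) =
        qComul f (mkA f a)
      exact (qComul_mk f a).symm
    map_one' := map_one (mkA f)
    map_mul' := map_mul (mkA f) }

lemma quotMk_apply (x : A) : quotMk f x = mkA f x := rfl

lemma quotMk_surjective : Function.Surjective (quotMk f) :=
  mkA_surjective f

/-- Lift a bialgebra homomorphism vanishing on the kernel to the quotient. -/
noncomputable def quotLift {X : Type u} [CommRing X] [HopfAlgebra k X]
    (g : A →ₐc[k] X) (h : ∀ x ∈ hker f, g x = 0) :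
    (A ⧸ hker f) →ₐc[k] X :=
  { toLinearMap := (Ideal.Quotient.liftₐ (hker f) (g : A →ₐ[k] X) (fun a ha => h a ha)).toLinearMap
    counit_comp := by
      apply LinearMap.ext
      intro q
      obtain ⟨a, rfl⟩ := mkA_surjective f q
      show counit (R := k)
          ((Ideal.Quotient.liftₐ (hker f) (g : A →ₐ[k] X) (fun a ha => h a ha)) (mkA f a)) =
        qCounit f (mkA f a)
      rw [qCounit_mk]
      have : (Ideal.Quotient.liftₐ (hker f) (g : A →ₐ[k] X) (fun a ha => h a ha)) (mkA f a)
          = g a := by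
        simp [mkA, Ideal.Quotient.mkₐ_eq_mk, Ideal.Quotient.liftₐ_apply]; rfl
      rw [this]
      exact CoalgHomClass.counit_comp_apply g a
    map_comp_comul := by
      apply LinearMap.ext
      intro q
      obtain ⟨a, rfl⟩ := mkA_surjective f q
      classical
      set r := ℛ k a with hrdef
      have hlift : ∀ y : A,
          (Ideal.Quotient.liftₐ (hker f) (g : A →ₐ[k] X) (fun a ha => h a ha)) (mkA f y)
            = g y := fun y => by
        simp [mkA, Ideal.Quotient.mkₐ_eq_mk, Ideal.Quotient.liftₐ_apply]; rfl
      show TensorProduct.map _ _ (qComul f (mkA f a)) = _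
      rw [qComul_mk_repr f r, map_sum]
      simp only [TensorProduct.map_tmul, LinearMap.coe_coe, AlgHom.toLinearMap_apply]
      rw [Finset.sum_congr rfl (fun i _ => by rw [hlift, hlift])]
      have hR : (Coalgebra.comul ∘ₗ
          (Ideal.Quotient.liftₐ (hker f) (g : A →ₐ[k] X) (fun a ha => h a ha)).toLinearMap)
          ((mkA f) a) = comul (R := k) (g a) := by
        simp only [LinearMap.comp_apply, AlgHom.toLinearMap_apply]
        rw [hlift]
      rw [hR, ← CoalgHomClass.map_comp_comul_apply g a, ← r.eq, map_sum]
      simp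
    map_one' := map_one (Ideal.Quotient.liftₐ (hker f) (g : A →ₐ[k] X) (fun a ha => h a ha))
    map_mul' := map_mul (Ideal.Quotient.liftₐ (hker f) (g : A →ₐ[k] X) (fun a ha => h a ha)) }

lemma quotLift_mk {X : Type u} [CommRing X] [HopfAlgebra k X]
    (g : A →ₐc[k] X) (h : ∀ x ∈ hker f, g x = 0) (x : A) :
    quotLift f g h (quotMk f x) = g x := by
  show (Ideal.Quotient.liftₐ (hker f) (g : A →ₐ[k] X) (fun a ha => h a ha)) (mkA f x) = g x
  simp [mkA, Ideal.Quotient.mkₐ_eq_mk, Ideal.Quotient.liftₐ_apply]; rfl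

lemma quotMk_eq_of_sub_mem {x y : A} (hxy : x - y ∈ hker f) :
    quotMk f x = quotMk f y := by
  show mkA f x = mkA f y
  simp only [mkA, Ideal.Quotient.mkₐ_eq_mk]
  exact Ideal.Quotient.eq.mpr hxy

end HopfQuot

end HopfQuotient

/-- **Statement 9.** Let `α1 : A1 → B`, `α2 : A2 → B` be morphisms of commutative Hopf
algebras over a field `k`, let `P_H` be a pullback of `(α1, α2)` and `P` a pullback of the
counits of `A1` and `A2`. Then the canonical morphism `P_H → P`, induced by the universal
property of `P` via the projections of `P_H` (whose composites with the counits of `A1`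
and `A2` are the counit of `P_H`), is injective on underlying sets. Equivalently, the
canonical morphism of affine group schemes `G1 * G2 → G1 *_H G2` is a quotient map. -/
theorem statement9 (k : Type u) [Field k]
    (A1 A2 B PH P : CommHopfAlgCat' k)
    (α1 : A1 ⟶ B) (α2 : A2 ⟶ B)
    (p1 : PH ⟶ A1) (p2 : PH ⟶ A2) (hPH : IsPullback p1 p2 α1 α2)
    (q1 : P ⟶ A1) (q2 : P ⟶ A2)
    (hP : IsPullback q1 q2 (CommHopfAlgCat'.counitHom A1) (CommHopfAlgCat'.counitHom A2))
    (hw1 : p1 ≫ CommHopfAlgCat'.counitHom A1 = CommHopfAlgCat'.counitHom PH)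
    (hw2 : p2 ≫ CommHopfAlgCat'.counitHom A2 = CommHopfAlgCat'.counitHom PH) :
    Function.Injective ⇑(hP.lift p1 p2 (hw1.trans hw2.symm)) := by
  classical
  intro x y hxy
  set L := hP.lift p1 p2 (hw1.trans hw2.symm) with hLdef
  have hLq1 : L ≫ q1 = p1 := hP.lift_fst p1 p2 (hw1.trans hw2.symm)
  have hLq2 : L ≫ q2 = p2 := hP.lift_snd p1 p2 (hw1.trans hw2.symm)
  let L' : PH.carrier →ₐc[k] P.carrier := L
  let p1' : PH.carrier →ₐc[k] A1.carrier := p1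
  let p2' : PH.carrier →ₐc[k] A2.carrier := p2
  let q1' : P.carrier →ₐc[k] A1.carrier := q1
  let q2' : P.carrier →ₐc[k] A2.carrier := q2
  have hp1ker : ∀ z ∈ HopfQuot.hker L', p1' z = 0 := by
    intro z hz
    have h1 : p1' z = q1' (L' z) := (DFunLike.congr_fun hLq1 z).symm
    rw [h1, HopfQuot.mem_hker.mp hz, map_zero]
  have hp2ker : ∀ z ∈ HopfQuot.hker L', p2' z = 0 := by
    intro z hz
    have h1 : p2' z = q2' (L' z) := (DFunLike.congr_fun hLq2 z).symm
    rw [h1, HopfQuot.mem_hker.mp hz, map_zero]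
  let Q : CommHopfAlgCat' k := ⟨PH.carrier ⧸ HopfQuot.hker L'⟩
  let π : PH ⟶ Q := HopfQuot.quotMk L'
  let β1 : Q ⟶ A1 := HopfQuot.quotLift L' p1' hp1ker
  let β2 : Q ⟶ A2 := HopfQuot.quotLift L' p2' hp2ker
  have hw : β1 ≫ α1 = β2 ≫ α2 := by
    apply DFunLike.ext
    intro q
    obtain ⟨z, rfl⟩ := HopfQuot.quotMk_surjective L' q
    show α1 (β1 (HopfQuot.quotMk L' z)) = α2 (β2 (HopfQuot.quotMk L' z))
    rw [show β1 (HopfQuot.quotMk L' z) = p1' z from HopfQuot.quotLift_mk L' p1' hp1ker z,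
      show β2 (HopfQuot.quotMk L' z) = p2' z from HopfQuot.quotLift_mk L' p2' hp2ker z]
    exact DFunLike.congr_fun hPH.w z
  let rmap : Q ⟶ PH := hPH.lift β1 β2 hw
  have hπβ1 : π ≫ β1 = p1 := by
    apply DFunLike.ext
    intro z
    exact HopfQuot.quotLift_mk L' p1' hp1ker z
  have hπβ2 : π ≫ β2 = p2 := by
    apply DFunLike.ext
    intro z
    exact HopfQuot.quotLift_mk L' p2' hp2ker z
  have hsect : π ≫ rmap = 𝟙 PH := by
    apply hPH.hom_ext
    · rw [Category.assoc, hPH.lift_fst β1 β2 hw, Category.id_comp, hπβ1]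
    · rw [Category.assoc, hPH.lift_snd β1 β2 hw, Category.id_comp, hπβ2]
  have hπ : π x = π y := by
    apply HopfQuot.quotMk_eq_of_sub_mem
    rw [HopfQuot.mem_hker, map_sub]
    have hxy' : L' x = L' y := hxy
    rw [hxy', sub_self]
  have h1 : rmap (π x) = x := DFunLike.congr_fun hsect x
  have h2 : rmap (π y) = y := DFunLike.congr_fun hsect y
  rw [← h1, ← h2, hπ]
end

section
/- Let k be a perfect field of characteristic p > 0 and V a finite-dimensional k-vector space. Let the symmetric group S_p act on V^{⊗p} by permuting the tensor factors, and let Fr_+(V) be the image of the composite H⁰(S_p, V^{⊗p}) ↪ V^{⊗p} ↠ H₀(S_p, V^{⊗p}) of the inclusion of invariants with the projection to coinvariants. Then there is a k-linear isomorphism t(V): V ⊗_{k,Frob} k → Fr_+(V) determined by t(V)(v ⊗ λ) = λ·[v ⊗ v ⊗ … ⊗ v], where [·] denotes the class in coinvariants; in particular this assignment is well-defined, additive, k-linear and bijective. -/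
open scoped TensorProduct

universe u v

variable (k : Type u) [Field k] (p : ℕ) [Fact p.Prime] [CharP k p] [ExpChar k p]
variable (V : Type v) [AddCommGroup V] [Module k V]

/-- The `p`-th tensor power `V^{⊗p}` of `V`. -/
abbrev TPow := ⨂[k] (_ : Fin p), V

/-- The action of a permutation `σ ∈ S_p` on `V^{⊗p}`, permuting the tensor factors. -/
noncomputable def permAction (σ : Equiv.Perm (Fin p)) : TPow k p V ≃ₗ[k] TPow k p V :=
  PiTensorProduct.reindex k (fun _ : Fin p => V) σ

/-- The submodule `H⁰(S_p, V^{⊗p})` of `S_p`-invariants of `V^{⊗p}`. -/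
noncomputable def invariants : Submodule k (TPow k p V) where
  carrier := {w | ∀ σ : Equiv.Perm (Fin p), permAction k p V σ w = w}
  add_mem' := fun hx hy σ => by rw [map_add, hx σ, hy σ]
  zero_mem' := fun σ => by rw [map_zero]
  smul_mem' := fun c x hx σ => by rw [map_smul, hx σ]

/-- The submodule of `V^{⊗p}` spanned by the elements `σw - w`, `σ ∈ S_p`, `w ∈ V^{⊗p}`. -/
noncomputable def coinvRel : Submodule k (TPow k p V) :=
  Submodule.span k {x | ∃ (σ : Equiv.Perm (Fin p)) (w : TPow k p V),
    x = permAction k p V σ w - w}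

/-- The module `H₀(S_p, V^{⊗p})` of `S_p`-coinvariants of `V^{⊗p}`. -/
abbrev Coinv := TPow k p V ⧸ coinvRel k p V

/-- `Fr_+(V)`: the image in the coinvariants `H₀(S_p, V^{⊗p})` of the invariants
`H⁰(S_p, V^{⊗p})`. -/
noncomputable def frPlus : Submodule k (Coinv k p V) :=
  (invariants k p V).map (coinvRel k p V).mkQ

/-- The `p`-th tensor power `v ⊗ v ⊗ … ⊗ v` of a vector `v`. -/
noncomputable def tpow (v : V) : TPow k p V :=
  PiTensorProduct.tprod k (fun _ : Fin p => v)

namespace Statement14Aux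
set_option linter.unusedSectionVars false

lemma q_perm (σ : Equiv.Perm (Fin p)) (w : TPow k p V) :
    (Submodule.Quotient.mk (permAction k p V σ w) : Coinv k p V)
      = Submodule.Quotient.mk w := by
  rw [Submodule.Quotient.eq]
  exact Submodule.subset_span ⟨σ, w, rfl⟩

lemma q_tprod_comp (σ : Equiv.Perm (Fin p)) (g : Fin p → V) :
    (Submodule.Quotient.mk (PiTensorProduct.tprod k (fun i => g (σ i))) : Coinv k p V)
      = Submodule.Quotient.mk (PiTensorProduct.tprod k g) := by
  have h := q_perm k p V σ (PiTensorProduct.tprod k (fun i => g (σ i)))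
  rw [permAction, PiTensorProduct.reindex_tprod] at h
  simpa using h.symm

lemma exists_perm_piecewise (s t : Finset (Fin p)) (h : s.card = t.card) (v w : V) :
    ∃ σ : Equiv.Perm (Fin p),
      ∀ i, (if σ i ∈ s then v else w) = (if i ∈ t then v else w) := by
  classical
  have e : {x : Fin p // x ∈ t} ≃ {x : Fin p // x ∈ s} := Finset.equivOfCardEq h.symm
  refine ⟨e.extendSubtype, fun i => ?_⟩
  by_cases hi : i ∈ t
  · rw [if_pos (e.extendSubtype_mem i hi), if_pos hi]
  · rw [if_neg (e.extendSubtype_not_mem i hi), if_neg hi]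

lemma q_tpow_add (v w : V) :
    (Submodule.Quotient.mk (tpow k p V (v + w)) : Coinv k p V)
      = Submodule.Quotient.mk (tpow k p V v) + Submodule.Quotient.mk (tpow k p V w) := by
  classical
  have hp : p.Prime := Fact.out
  set q := (coinvRel k p V).mkQ with hq
  have hmk : ∀ x : TPow k p V, q x = Submodule.Quotient.mk x := fun x => rfl
  -- expansion of the tensor power of a sum
  have expand : tpow k p V (v + w)
      = ∑ s : Finset (Fin p),
          PiTensorProduct.tprod k (fun i => if i ∈ s then v else w) := by
    have h := (PiTensorProduct.tprod k (s := fun _ : Fin p => V)).map_add_univ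
      (fun _ => v) (fun _ => w)
    rw [tpow]
    have h2 : (fun _ : Fin p => v + w) = (fun _ : Fin p => v) + (fun _ => w) := rfl
    rw [h2, h]
    refine Finset.sum_congr rfl fun s _ => ?_
    congr 1
  have key : q (tpow k p V (v + w)) = q (tpow k p V v) + q (tpow k p V w) := by
    rw [expand, map_sum]
    have : ∀ s : Finset (Fin p),
        q (PiTensorProduct.tprod k (fun i => if i ∈ s then v else w))
          = (fun j : ℕ => q (PiTensorProduct.tprod k
              (fun i => if i ∈ s then v else w))) s.card := fun s => rfl
    -- group by cardinality
    rw [← Finset.powerset_univ, Finset.sum_powerset]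
    -- define the inner sums
    have hcongr : ∀ (s t : Finset (Fin p)), s.card = t.card →
        q (PiTensorProduct.tprod k (fun i => if i ∈ s then v else w))
          = q (PiTensorProduct.tprod k (fun i => if i ∈ t then v else w)) := by
      intro s t hst
      obtain ⟨σ, hσ⟩ := exists_perm_piecewise (p := p) (V := V) s t hst v w
      rw [hmk, hmk]
      have := q_tprod_comp k p V σ (fun i => if i ∈ s then v else w)
      rw [show (fun i => if σ i ∈ s then v else w) = (fun i => if i ∈ t then v else w)
        from funext hσ] at this
      exact this.symm
    have hzero : ∀ j ∈ Finset.range (Finset.univ.card (α := Fin p) + 1),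
        j ≠ 0 → j ≠ p →
        (∑ s ∈ Finset.powersetCard j (Finset.univ : Finset (Fin p)),
          q (PiTensorProduct.tprod k (fun i => if i ∈ s then v else w))) = 0 := by
      intro j hj hj0 hjp
      rw [Finset.mem_range, Finset.card_univ, Fintype.card_fin] at hj
      have hjle : j ≤ p := Nat.lt_succ_iff.mp hj
      obtain ⟨s₀, hs₀sub, hs₀⟩ := Finset.exists_subset_card_eq
        (by simpa [Finset.card_univ] using hjle :
          j ≤ (Finset.univ : Finset (Fin p)).card)
      have : ∀ s ∈ Finset.powersetCard j (Finset.univ : Finset (Fin p)),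
          q (PiTensorProduct.tprod k (fun i => if i ∈ s then v else w))
            = q (PiTensorProduct.tprod k (fun i => if i ∈ s₀ then v else w)) := by
        intro s hs
        rw [Finset.mem_powersetCard] at hs
        exact hcongr s s₀ (hs.2.trans hs₀.symm)
      rw [Finset.sum_congr rfl this, Finset.sum_const, Finset.card_powersetCard,
        Finset.card_univ, Fintype.card_fin]
      have hdvd : p ∣ p.choose j := hp.dvd_choose_self hj0 (lt_of_le_of_ne hjle hjp)
      have : ((p.choose j : k)) = 0 := (CharP.cast_eq_zero_iff k p _).mpr hdvd
      rw [← Nat.cast_smul_eq_nsmul k, this, zero_smul]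
    have hsub : ({0, p} : Finset ℕ)
        ⊆ Finset.range ((Finset.univ : Finset (Fin p)).card + 1) := by
      intro j hj
      rw [Finset.mem_range, Finset.card_univ, Fintype.card_fin]
      rcases Finset.mem_insert.mp hj with h | h
      · omega
      · rw [Finset.mem_singleton] at h; omega
    rw [← Finset.sum_subset hsub (fun j hj hj' => by
      refine hzero j hj ?_ ?_ <;> intro hh <;> exact hj' (by simp [hh]))]
    rw [Finset.sum_pair (by exact_mod_cast hp.ne_zero.symm : (0 : ℕ) ≠ p)]
    have hterm0 : (∑ s ∈ Finset.powersetCard 0 (Finset.univ : Finset (Fin p)),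
        q (PiTensorProduct.tprod k (fun i => if i ∈ s then v else w)))
          = q (tpow k p V w) := by
      rw [Finset.powersetCard_zero, Finset.sum_singleton]
      have he : (fun i : Fin p => if i ∈ (∅ : Finset (Fin p)) then v else w)
          = (fun _ : Fin p => w) := funext fun i => by simp
      rw [he]; rfl
    have htermp : (∑ s ∈ Finset.powersetCard p (Finset.univ : Finset (Fin p)),
        q (PiTensorProduct.tprod k (fun i => if i ∈ s then v else w)))
          = q (tpow k p V v) := by
      have hpu : (Finset.univ : Finset (Fin p)).card = p := by simp
      have hps := Finset.powersetCard_self (Finset.univ : Finset (Fin p))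
      rw [hpu] at hps
      rw [hps, Finset.sum_singleton]
      have he : (fun i : Fin p => if i ∈ (Finset.univ : Finset (Fin p)) then v else w)
          = (fun _ : Fin p => v) := funext fun i => by simp
      rw [he]; rfl
    rw [hterm0, htermp, add_comm]
  simpa [hmk] using key



lemma tpow_smul (c : k) (v : V) : tpow k p V (c • v) = c ^ p • tpow k p V v := by
  have h := MultilinearMap.map_smul_univ
    (PiTensorProduct.tprod k (s := fun _ : Fin p => V)) (fun _ => c) (fun _ => v)
  simpa [tpow, Finset.prod_const] using h

/-- The Frobenius-semilinear map `v ↦ [v ⊗ ⋯ ⊗ v]` into the coinvariants. -/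
noncomputable def Tmap : V →ₛₗ[frobenius k p] Coinv k p V where
  toFun v := Submodule.Quotient.mk (tpow k p V v)
  map_add' v w := q_tpow_add k p V v w
  map_smul' c v := by
    show (Submodule.Quotient.mk (tpow k p V (c • v)) : Coinv k p V)
      = frobenius k p c • (Submodule.Quotient.mk (tpow k p V v) : Coinv k p V)
    rw [tpow_smul, Submodule.Quotient.mk_smul]
    rfl

section Coord

variable {ι : Type*} [Fintype ι] [DecidableEq ι]

/-- Coordinate functional on `V^{⊗p}` attached to a basis `b` of `V` and a multi-index
`f`. -/
noncomputable def coordF (b : Module.Basis ι k V) (f : Fin p → ι) : TPow k p V →ₗ[k] k :=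
  PiTensorProduct.lift
    ((MultilinearMap.mkPiAlgebra k (Fin p) k).compLinearMap (fun m => b.coord (f m)))

lemma coordF_tprod (b : Module.Basis ι k V) (f : Fin p → ι) (g : Fin p → V) :
    coordF k p V b f (PiTensorProduct.tprod k g) = ∏ m, b.repr (g m) (f m) := by
  simp [coordF, Module.Basis.coord_apply]

lemma coordF_perm (b : Module.Basis ι k V) (σ : Equiv.Perm (Fin p)) (f : Fin p → ι) :
    (coordF k p V b f).comp (permAction k p V σ).toLinearMap
      = coordF k p V b (fun m => f (σ m)) := by
  apply PiTensorProduct.ext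
  apply MultilinearMap.ext
  intro g
  simp only [LinearMap.compMultilinearMap_apply, LinearMap.comp_apply,
    LinearEquiv.coe_coe, permAction, PiTensorProduct.reindex_tprod, coordF_tprod]
  rw [← Equiv.prod_comp σ (fun m => b.repr (g (σ.symm m)) (f m))]
  refine Finset.prod_congr rfl fun m _ => ?_
  rw [Equiv.symm_apply_apply]

lemma coordF_permAction (b : Module.Basis ι k V) (σ : Equiv.Perm (Fin p)) (f : Fin p → ι)
    (u : TPow k p V) :
    coordF k p V b f (permAction k p V σ u) = coordF k p V b (fun m => f (σ m)) u :=
  LinearMap.congr_fun (coordF_perm k p V b σ f) u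

/-- Decomposition of an arbitrary element of `V^{⊗p}` along basis tensors. -/
lemma sum_coordF_smul (b : Module.Basis ι k V) (u : TPow k p V) :
    ∑ f : Fin p → ι, coordF k p V b f u • PiTensorProduct.tprod k (fun m => b (f m)) = u := by
  classical
  have : (∑ f : Fin p → ι,
      (coordF k p V b f).smulRight (PiTensorProduct.tprod k (fun m => b (f m))))
        = LinearMap.id (R := k) (M := TPow k p V) := by
    apply PiTensorProduct.ext
    apply MultilinearMap.ext
    intro g
    simp only [LinearMap.compMultilinearMap_apply, LinearMap.coe_sum, Finset.sum_apply,
      LinearMap.smulRight_apply, LinearMap.id_apply, coordF_tprod]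
    have hg : ∀ m : Fin p, g m = ∑ i : ι, b.repr (g m) i • b i := fun m =>
      (b.sum_repr (g m)).symm
    conv_rhs => rw [show (PiTensorProduct.tprod k) g
      = (PiTensorProduct.tprod k) (fun m => ∑ i : ι, b.repr (g m) i • b i) by
        exact congrArg _ (funext hg)]
    rw [MultilinearMap.map_sum_finset (PiTensorProduct.tprod k (s := fun _ : Fin p => V))
      (fun m i => b.repr (g m) i • b i) (fun _ => Finset.univ)]
    rw [Fintype.piFinset_univ]
    refine Finset.sum_congr rfl fun f _ => ?_
    rw [MultilinearMap.map_smul_univ]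
  have h := LinearMap.congr_fun this u
  simpa using h

end Coord

section Rot

variable {ι : Type*}

open Fin.NatCast Fin.CommRing in
lemma const_of_rot [NeZero p] (f : Fin p → ι) (d : Fin p) (hd : d ≠ 0)
    (hf : ∀ i, f (i + d) = f i) (m : Fin p) : f m = f 0 := by
  have hp : p.Prime := Fact.out
  have key : ∀ (n : ℕ) (x : Fin p), f (x + n • d) = f x := by
    intro n
    induction n with
    | zero => intro x; simp
    | succ n ih =>
      intro x
      rw [succ_nsmul, ← add_assoc, hf, ih]
  have hsurj : ∀ e : Fin p, ∃ n : ℕ, (n • d) = e := by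
    have hdv : (d : ℕ) ≠ 0 := by
      intro h
      exact hd (Fin.ext (by simp [h]))
    have hnd : ¬ (p ∣ (d : ℕ)) := Nat.not_dvd_of_pos_of_lt (Nat.pos_of_ne_zero hdv) d.isLt
    have hco : Nat.Coprime (d : ℕ) p := ((Nat.Prime.coprime_iff_not_dvd hp).mpr hnd).symm
    obtain ⟨a, -, ha⟩ := Nat.exists_mul_mod_eq_one_of_coprime hco hp.one_lt
    intro e
    refine ⟨a * (e : ℕ), ?_⟩
    have h1 : ((a * (e : ℕ)) • d) = (((a * (e : ℕ)) : ℕ) : Fin p) * d := nsmul_eq_mul _ _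
    apply Fin.ext
    rw [h1, Fin.val_mul, Fin.val_natCast, Nat.mod_mul_mod]
    have h2 : a * (e : ℕ) * (d : ℕ) = (e : ℕ) * ((d : ℕ) * a) := by ring
    rw [h2, Nat.mul_mod, ha, mul_one, Nat.mod_mod_of_dvd _ dvd_rfl, Nat.mod_eq_of_lt e.isLt]
  obtain ⟨n, hn⟩ := hsurj m
  have h3 := key n 0
  rw [hn, zero_add] at h3
  exact h3

lemma sum_nonconst_eq_zero [NeZero p] [Fintype ι] [DecidableEq ι]
    {M : Type*} [AddCommGroup M] [Module k M]
    (h : (Fin p → ι) → M)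
    (hperm : ∀ (f : Fin p → ι) (σ : Equiv.Perm (Fin p)), h (fun m => f (σ m)) = h f) :
    ∑ f ∈ Finset.univ.filter (fun f : Fin p → ι => ¬ ∃ i, f = fun _ => i), h f = 0 := by
  classical
  set T := Finset.univ.filter (fun f : Fin p → ι => ¬ ∃ i, f = fun _ => i) with hT
  set π : (Fin p → ι) → Finset (Fin p → ι) :=
    fun f => Finset.image (fun j : Fin p => fun m => f (m + j)) Finset.univ with hπ
  have hself : ∀ f, f ∈ π f := fun f =>
    Finset.mem_image.mpr ⟨0, Finset.mem_univ _, by funext m; rw [add_zero]⟩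
  have horb : ∀ f ∈ T, ∀ g ∈ π f, g ∈ T ∧ π g = π f := by
    intro f hf g hg
    obtain ⟨j, _, rfl⟩ := Finset.mem_image.mp hg
    constructor
    · rw [hT, Finset.mem_filter] at hf ⊢
      refine ⟨Finset.mem_univ _, fun hcon => hf.2 ?_⟩
      obtain ⟨i, hi⟩ := hcon
      refine ⟨i, funext fun m => ?_⟩
      have := congrFun hi (m - j)
      simpa [sub_add_cancel] using this
    · ext x
      simp only [hπ, Finset.mem_image]
      constructor
      · rintro ⟨j', _, rfl⟩
        exact ⟨j' + j, Finset.mem_univ _, funext fun m => by rw [add_assoc]⟩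
      · rintro ⟨j'', _, rfl⟩
        refine ⟨j'' - j, Finset.mem_univ _, funext fun m => ?_⟩
        rw [add_assoc, sub_add_cancel]
  have hmaps : ∀ f ∈ T, π f ∈ T.image π := fun f hf => Finset.mem_image_of_mem _ hf
  rw [← Finset.sum_fiberwise_of_maps_to hmaps h]
  refine Finset.sum_eq_zero fun O hO => ?_
  obtain ⟨f, hfT, rfl⟩ := Finset.mem_image.mp hO
  have hfil : T.filter (fun g => π g = π f) = π f := by
    ext g
    constructor
    · intro hg
      rw [Finset.mem_filter] at hg
      rw [← hg.2]
      exact hself g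
    · intro hg
      exact Finset.mem_filter.mpr ⟨(horb f hfT g hg).1, (horb f hfT g hg).2⟩
  rw [hfil]
  have hinj : Set.InjOn (fun j : Fin p => fun m => f (m + j))
      ↑(Finset.univ : Finset (Fin p)) := by
    intro a _ b _ hab
    by_contra hne
    have hd : a - b ≠ 0 := sub_ne_zero_of_ne hne
    have hrot : ∀ i : Fin p, f (i + (a - b)) = f i := by
      intro i
      have h1 := congrFun hab (i - b)
      simp only at h1
      have h2 : i - b + a = i + (a - b) := by
        rw [sub_add_eq_add_sub, add_sub_assoc]
      have h3 : i - b + b = i := sub_add_cancel i b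
      rw [h2, h3] at h1
      exact h1
    have hconst : ∀ m : Fin p, f m = f 0 :=
      const_of_rot p f (a - b) hd hrot
    rw [hT, Finset.mem_filter] at hfT
    exact hfT.2 ⟨f 0, funext hconst⟩
  rw [Finset.sum_image hinj]
  have hrw : ∀ j : Fin p, h (fun m => f (m + j)) = h f := by
    intro j
    have := hperm f (Equiv.addRight j)
    simpa using this
  rw [Finset.sum_congr rfl fun j _ => hrw j, Finset.sum_const, Finset.card_univ,
    Fintype.card_fin, ← Nat.cast_smul_eq_nsmul k, CharP.cast_eq_zero, zero_smul]

end Rot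

end Statement14Aux

open Statement14Aux in
/-- **Statement 14.** Let `k` be a perfect field of characteristic `p > 0` and `V` a finite
dimensional `k`-vector space. Then there is a `k`-linear isomorphism
`t(V) : V ⊗_{k,Frob} k → Fr_+(V)` determined by `t(V)(v ⊗ λ) = λ·[v ⊗ … ⊗ v]`; equivalently
(identifying the Frobenius twist `V ⊗_{k,Frob} k` with `V` viewed via the Frobenius), there
is an additive, Frobenius-semilinear bijection `t : V → Fr_+(V)` with
`t v = [v ⊗ … ⊗ v]`. -/
theorem statement14 [PerfectRing k p] [FiniteDimensional k V] :
    ∃ t : V →ₛₗ[frobenius k p] ↥(frPlus k p V),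
      Function.Bijective t ∧
      ∀ v : V, ((t v : Coinv k p V) = Submodule.Quotient.mk (tpow k p V v)) := by
  classical
  haveI : NeZero p := ⟨(Fact.out : p.Prime).ne_zero⟩
  have hp : p.Prime := Fact.out
  set n := Module.finrank k V with hn
  let b : Module.Basis (Fin n) k V := Module.finBasis k V
  have hmem : ∀ v : V, Tmap k p V v ∈ frPlus k p V :=
    fun v => ⟨tpow k p V v, fun σ => by
      rw [tpow, permAction, PiTensorProduct.reindex_tprod], rfl⟩
  refine ⟨LinearMap.codRestrict _ (Tmap k p V) hmem, ⟨?_, ?_⟩, fun v => rfl⟩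
  · -- injectivity
    intro v v' hvv'
    have h0 : Tmap k p V (v - v') = 0 := by
      have h1 : Tmap k p V v = Tmap k p V v' := congrArg Subtype.val hvv'
      rw [map_sub, h1, sub_self]
    have hker : ∀ i : Fin n, coinvRel k p V ≤ LinearMap.ker (coordF k p V b (fun _ => i)) := by
      intro i
      rw [coinvRel, Submodule.span_le]
      rintro x ⟨σ, u, rfl⟩
      have hc := coordF_permAction k p V b σ (fun _ => i) u
      simp only [SetLike.mem_coe, LinearMap.mem_ker, map_sub]
      rw [hc, sub_self]
    have hcoeff : ∀ i : Fin n, b.repr (v - v') i ^ p = 0 := by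
      intro i
      have h2 := congrArg (Submodule.liftQ (coinvRel k p V)
        (coordF k p V b (fun _ => i)) (hker i)) h0
      rw [map_zero] at h2
      have h3 : Tmap k p V (v - v')
          = Submodule.Quotient.mk (tpow k p V (v - v')) := rfl
      rw [h3, Submodule.liftQ_apply] at h2
      rw [tpow, coordF_tprod] at h2
      simpa [Finset.prod_const] using h2
    have hrepr : b.repr (v - v') = 0 := by
      ext i
      have := hcoeff i
      rw [pow_eq_zero_iff hp.ne_zero] at this
      simpa using this
    have : v - v' = 0 := by
      have := congrArg b.repr.symm hrepr
      simpa using this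
    exact sub_eq_zero.mp this
  · -- surjectivity
    rintro ⟨z, hz⟩
    obtain ⟨w, hwinv, rfl⟩ := hz
    set c : (Fin p → Fin n) → k := fun f => coordF k p V b f w with hc
    have hcinv : ∀ (f : Fin p → Fin n) (σ : Equiv.Perm (Fin p)),
        c (fun m => f (σ m)) = c f := by
      intro f σ
      have h1 := coordF_permAction k p V b σ f w
      rw [hwinv σ] at h1
      exact h1.symm
    -- decompose [w]
    have hdec : ((coinvRel k p V).mkQ w : Coinv k p V)
        = ∑ f : Fin p → Fin n,
            c f • Submodule.Quotient.mk (PiTensorProduct.tprod k (fun m => b (f m))) := by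
      conv_lhs => rw [← sum_coordF_smul k p V b w]
      rw [map_sum]
      refine Finset.sum_congr rfl fun f _ => ?_
      rw [map_smul]
      rfl
    have hsplit := Finset.sum_filter_add_sum_filter_not
      (Finset.univ : Finset (Fin p → Fin n)) (fun f => ∃ i, f = fun _ => i)
      (fun f => c f • (Submodule.Quotient.mk
        (PiTensorProduct.tprod k (fun m => b (f m))) : Coinv k p V))
    have hnon : ∑ f ∈ Finset.univ.filter
        (fun f : Fin p → Fin n => ¬ ∃ i, f = fun _ => i),
        c f • (Submodule.Quotient.mk
          (PiTensorProduct.tprod k (fun m => b (f m))) : Coinv k p V) = 0 := by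
      convert sum_nonconst_eq_zero k p (M := Coinv k p V)
        (h := fun f => c f • Submodule.Quotient.mk
          (PiTensorProduct.tprod k (fun m => b (f m)))) ?_
      intro f σ
      show c (fun m => f (σ m)) • (Submodule.Quotient.mk
          (PiTensorProduct.tprod k (fun m => b (f (σ m)))) : Coinv k p V)
        = c f • Submodule.Quotient.mk (PiTensorProduct.tprod k (fun m => b (f m)))
      rw [hcinv f σ]
      congr 1
      exact q_tprod_comp k p V σ (fun m => b (f m))
    have hconstpart : ∑ f ∈ Finset.univ.filter
        (fun f : Fin p → Fin n => ∃ i, f = fun _ => i),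
        c f • (Submodule.Quotient.mk
          (PiTensorProduct.tprod k (fun m => b (f m))) : Coinv k p V)
        = ∑ i : Fin n, c (fun _ => i) • (Submodule.Quotient.mk
            (tpow k p V (b i)) : Coinv k p V) := by
      have himg : Finset.univ.filter (fun f : Fin p → Fin n => ∃ i, f = fun _ => i)
          = Finset.univ.image (fun i : Fin n => (fun _ : Fin p => i)) := by
        ext f
        simp only [Finset.mem_filter, Finset.mem_univ, true_and, Finset.mem_image]
        constructor
        · rintro ⟨i, h⟩; exact ⟨i, h.symm⟩
        · rintro ⟨i, h⟩; exact ⟨i, h.symm⟩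
      rw [himg, Finset.sum_image (fun i _ i' _ hii' => congrFun hii' 0)]
      rfl
    -- now produce the preimage
    refine ⟨∑ i : Fin n, ((frobeniusEquiv k p).symm (c (fun _ => i))) • b i, ?_⟩
    apply Subtype.ext
    show Tmap k p V _ = (coinvRel k p V).mkQ w
    rw [hdec, ← hsplit, hnon, add_zero, hconstpart]
    rw [map_sum]
    refine Finset.sum_congr rfl fun i _ => ?_
    rw [LinearMap.map_smulₛₗ, frobenius_apply_frobeniusEquiv_symm]
    rfl
end

section
/- Let k be a perfect field of characteristic p > 0, Γ a group, and V a finite-dimensional k-linear representation of Γ. Let Γ act diagonally on V^{⊗p} and let S_p act by permuting the tensor factors; these actions commute, so Fr_+(V), the image of the composite H⁰(S_p, V^{⊗p}) ↪ V^{⊗p} ↠ H₀(S_p, V^{⊗p}), carries an induced Γ-action. Let Γ act on the Frobenius twist V ⊗_{k,Frob} k through its action on V. Then the k-linear isomorphism t(V): V ⊗_{k,Frob} k → Fr_+(V), v ⊗ λ ↦ λ·[v ⊗ … ⊗ v], is Γ-equivariant, i.e. an isomorphism of representations of Γ. -/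
open scoped TensorProduct

universe u v

variable (k : Type u) [Field k] (p : ℕ) [Fact p.Prime] [CharP k p] [ExpChar k p]
variable (V : Type v) [AddCommGroup V] [Module k V]

variable {Γ : Type*} [Group Γ]

/-- The diagonal action of a group element on `V^{⊗p}` induced by a representation on `V`. -/
noncomputable def tensorStep (ρ : Representation k Γ V) (g : Γ) :
    TPow k p V →ₗ[k] TPow k p V :=
  PiTensorProduct.map (fun _ : Fin p => ρ g)

lemma coinvRel_le_comap (ρ : Representation k Γ V) (g : Γ) :
    coinvRel k p V ≤ (coinvRel k p V).comap (tensorStep k p V ρ g) := by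
  rw [coinvRel, Submodule.span_le]
  rintro x ⟨σ, w, rfl⟩
  simp only [SetLike.mem_coe, Submodule.mem_comap, map_sub]
  have hc : tensorStep k p V ρ g (permAction k p V σ w)
      = permAction k p V σ (tensorStep k p V ρ g w) := by
    simpa [tensorStep, permAction] using
      (PiTensorProduct.map_reindex (fun _ : Fin p => ρ g) (σ : Fin p ≃ Fin p) w)
  rw [hc]
  exact Submodule.subset_span ⟨σ, tensorStep k p V ρ g w, rfl⟩

/-- The action of a group element on the coinvariants `H₀(S_p, V^{⊗p})` induced by the
diagonal action on `V^{⊗p}`. -/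
noncomputable def coinvMap (ρ : Representation k Γ V) (g : Γ) :
    Coinv k p V →ₗ[k] Coinv k p V :=
  Submodule.mapQ _ _ (tensorStep k p V ρ g) (coinvRel_le_comap k p V ρ g)

/-- **Statement 15.** Let `k` be a perfect field of characteristic `p > 0`, `Γ` a group and
`V` a finite dimensional `k`-linear representation of `Γ`.  The canonical Frobenius-
semilinear isomorphism `t(V) : V → Fr_+(V)`, `v ↦ [v ⊗ … ⊗ v]`, is `Γ`-equivariant for the
action of `Γ` on `Fr_+(V) ⊆ H₀(S_p, V^{⊗p})` induced by the diagonal action of `Γ` on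
`V^{⊗p}`. -/
theorem statement15 [PerfectRing k p] [FiniteDimensional k V]
    (ρ : Representation k Γ V)
    (t : V →ₛₗ[frobenius k p] ↥(frPlus k p V))
    (ht : ∀ v : V, ((t v : Coinv k p V) = Submodule.Quotient.mk (tpow k p V v))) :
    ∀ (g : Γ) (v : V),
      ((t (ρ g v) : Coinv k p V)) = coinvMap k p V ρ g ((t v : Coinv k p V)) := by
  intro g v
  rw [ht, ht]
  rw [coinvMap, Submodule.mapQ_apply]
  congr 1
  simp [tpow, tensorStep, PiTensorProduct.map_tprod]
end
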